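/- arXiv:2512.12046 — 2 statements merged into one kernel-verified Lean document; each statement's English description precedes it below -/
import Mathlib

section
/- Let V* : F → ℝ_{≤0} with V*(s,g) ≤ -1 whenever s ≠ g and V*(g,g) = 0, and let Ṽ*(s,g) = (1 + ε/2) V*(s,g) for some ε > 0. Suppose d_θ : F → ℝ satisfies |d_θ(s,g) + Ṽ*(s,g)| ≤ ε/2 for all (s,g) ∈ F and d_θ(g,g) = 0. Then d_θ(s,g) ≥ -V*(s,g) for all (s,g) ∈ F. -/
theorem stmt4 {S : Type*} (F : Set (S × S)) (ε : ℝ) (hε : 0 < ε)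
    (V d : S → S → ℝ)
    (hVneg : ∀ p ∈ F, V p.1 p.2 ≤ 0)
    (hV1 : ∀ p ∈ F, p.1 ≠ p.2 → V p.1 p.2 ≤ -1)
    (hV0 : ∀ g, V g g = 0)
    (happrox : ∀ p ∈ F, |d p.1 p.2 + (1 + ε / 2) * V p.1 p.2| ≤ ε / 2)
    (hd0 : ∀ g, d g g = 0) :
    ∀ p ∈ F, d p.1 p.2 ≥ -V p.1 p.2 := by
  intro p hp
  by_cases h : p.1 = p.2
  · rw [h, hd0, hV0]; norm_num
  · have hV := hV1 p hp h
    have := abs_le.mp (happrox p hp)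
    nlinarith [this.1, this.2]
end

section
/- Let d : ℝⁿ → ℝ be differentiable at s, c ≥ 0, and f ∈ ℝⁿ. Suppose for all sufficiently small Δt > 0, d(s) ≤ c·Δt + d(s + f·Δt + o(Δt)) where the remainder term satisfies o(Δt)/Δt → 0. Then 0 ≤ c + ∇d(s)ᵀ f. -/
open Topology Filter Asymptotics

/-!
Along the perturbed ray `t ↦ s + t • f + r t` with `r t = o(t)`, the displacement from `s` is
`O(t)`, so differentiability of `g` at `s` gives `g (s + t • f + r t) = g s + t • g' f + o(t)`.
Hence the difference quotients along the ray converge to `g' f`, and dividing the constraint by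
`t > 0` bounds them below by `-c`.
-/

section PerturbedRay

variable {E F : Type*} [NormedAddCommGroup E] [NormedSpace ℝ E]
  [NormedAddCommGroup F] [NormedSpace ℝ F]
  {g : E → F} {g' : E →L[ℝ] F} {s f : E} {r : ℝ → E} {l : Filter ℝ}

theorem HasFDerivAt.isLittleO_sub_smul_along_perturbed_ray (hg : HasFDerivAt g g' s)
    (hl : l ≤ 𝓝 0) (hr : r =o[l] id) :
    (fun t => g (s + t • f + r t) - g s - t • g' f) =o[l] id := by
  set v : ℝ → E := fun t => t • f + r t
  have hv : v =O[l] id :=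
    (isBigO_of_le' l fun t => (norm_smul t f).trans_le (mul_comm ‖t‖ ‖f‖).le).add hr.isBigO
  have hv0 : Tendsto v l (𝓝 0) := hv.trans_tendsto (tendsto_id.mono_left hl)
  have hlin : (fun t => g (s + v t) - g s - g' (v t)) =o[l] id :=
    ((hasFDerivAt_iff_isLittleO_nhds_zero.mp hg).comp_tendsto hv0).trans_isBigO hv
  have hrem : (fun t => g' (r t)) =o[l] id := (g'.isBigO_comp r l).trans_isLittleO hr
  refine (hlin.add hrem).congr_left fun t => ?_
  simp only [v, map_add, map_smul, add_assoc]
  abel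

theorem HasFDerivAt.tendsto_slope_along_perturbed_ray (hg : HasFDerivAt g g' s)
    (hl : l ≤ 𝓝[≠] 0) (hr : r =o[l] id) :
    Tendsto (fun t => t⁻¹ • (g (s + t • f + r t) - g s)) l (𝓝 (g' f)) := by
  have h := (hg.isLittleO_sub_smul_along_perturbed_ray (f := f) (hl.trans nhdsWithin_le_nhds) hr
    ).tendsto_inv_smul_nhds_zero.add_const (g' f)
  rw [zero_add] at h
  refine h.congr' ((eventually_mem_nhdsWithin.filter_mono hl).mono fun t (ht : t ≠ 0) => ?_)
  simp [smul_sub, smul_smul, inv_mul_cancel₀ ht]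

end PerturbedRay

theorem stmt9_general {n : ℕ} (d : EuclideanSpace ℝ (Fin n) → ℝ)
    (s : EuclideanSpace ℝ (Fin n)) (hd : DifferentiableAt ℝ d s)
    (c : ℝ) (f : EuclideanSpace ℝ (Fin n))
    (r : ℝ → EuclideanSpace ℝ (Fin n))
    (hr : r =o[𝓝[>] (0 : ℝ)] fun t => t)
    (h : ∀ᶠ Δt in 𝓝[>] (0 : ℝ), d s ≤ c * Δt + d (s + Δt • f + r Δt)) :
    0 ≤ c + fderiv ℝ d s f := by
  have hslope := hd.hasFDerivAt.tendsto_slope_along_perturbed_ray (f := f)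
    (nhdsGT_le_nhdsNE 0) hr
  have hbound : ∀ᶠ t in 𝓝[>] (0 : ℝ), -c ≤ t⁻¹ • (d (s + t • f + r t) - d s) := by
    filter_upwards [h, self_mem_nhdsWithin] with t ht (htpos : 0 < t)
    rw [smul_eq_mul, inv_mul_eq_div, le_div_iff₀ htpos]
    linarith
  linarith [ge_of_tendsto hslope hbound]

theorem stmt9 {n : ℕ} (d : EuclideanSpace ℝ (Fin n) → ℝ)
    (s : EuclideanSpace ℝ (Fin n)) (hd : DifferentiableAt ℝ d s)
    (c : ℝ) (hc : 0 ≤ c) (f : EuclideanSpace ℝ (Fin n))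
    (r : ℝ → EuclideanSpace ℝ (Fin n))
    (hr : r =o[𝓝[>] (0 : ℝ)] fun t => t)
    (h : ∀ᶠ Δt in 𝓝[>] (0 : ℝ), d s ≤ c * Δt + d (s + Δt • f + r Δt)) :
    0 ≤ c + fderiv ℝ d s f :=
  stmt9_general d s hd c f r hr h
end
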